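/- Let m ≥ 1 be an integer and let n, k be natural numbers. Then ∫∫_ℂ z^n · conj(z)^k · K_m(|z|²) dA(z) = π (n!)^m if n = k, and = 0 if n ≠ k, where dA denotes the Lebesgue (area) measure on ℂ. -/

import Mathlib

/-!
In polar coordinates `z = r e^{iθ}` the integral factors into the angular integral
`∫_{-π}^{π} e^{i(n-k)θ} dθ = 2π δ_{nk}` and the radial integral
`∫_0^∞ r^{2n+1} K_m(r²) dr = ½ ∫_0^∞ x^n K_m(x) dx`. By Tonelli and the substitution
`x = tu`, the `n`-th moment of a Mellin convolution is the product of the `n`-th moments of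
its factors, so the `n`-th moment of `K_m` is the `m`-th power of that of `K_1 = e^{-x}`,
which is `n!`.
-/

open MeasureTheory

/-- The kernel `K_m`, defined recursively by `K_1(x) = e^{-x}` and
`K_{m+1}(x) = ∫_0^∞ K_m(x/t) e^{-t} dt/t` (Mellin convolution with `K_1`).
The value for `m = 0` is junk. -/
noncomputable def Kker : ℕ → ℝ → ℝ
  | 0, _ => 0
  | 1, x => Real.exp (-x)
  | (m + 2), x => ∫ t in Set.Ioi (0 : ℝ), Kker (m + 1) (x / t) * Real.exp (-t) / t

open Set ENNReal
open scoped Real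

noncomputable def mellinConv (K g : ℝ → ℝ) (x : ℝ) : ℝ :=
  ∫ t in Ioi 0, K (x / t) * g t / t

lemma Kker_add_two (m : ℕ) : Kker (m + 2) = mellinConv (Kker (m + 1)) fun t => Real.exp (-t) :=
  rfl

lemma setLIntegral_Ioi_comp_mul_left {t : ℝ} (ht : 0 < t) (F : ℝ → ℝ≥0∞) :
    ∫⁻ u in Ioi 0, ENNReal.ofReal t * F (t * u) = ∫⁻ x in Ioi 0, F x := by
  have hderiv (u : ℝ) : HasDerivWithinAt (t * ·) t (Ioi 0) u := by
    simpa using ((hasDerivAt_id u).const_mul t).hasDerivWithinAt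
  have := lintegral_image_eq_lintegral_abs_deriv_mul measurableSet_Ioi (fun u _ => hderiv u)
    (mul_right_injective₀ ht.ne').injOn F
  rw [image_const_mul_Ioi_zero ht, abs_of_pos ht] at this
  exact this.symm

section MellinConv

variable {K g : ℝ → ℝ} (n : ℕ)

theorem lintegral_pow_mul_lintegral_mellinConv (hK : Measurable K) (hg : Measurable g)
    (hg₀ : ∀ t, 0 ≤ g t) :
    ∫⁻ x in Ioi 0, ∫⁻ t in Ioi 0, ENNReal.ofReal (x ^ n * (K (x / t) * g t / t)) =
      (∫⁻ u in Ioi 0, ENNReal.ofReal (u ^ n * K u)) *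
        ∫⁻ t in Ioi 0, ENNReal.ofReal (t ^ n * g t) := by
  have hinner : ∀ t ∈ Ioi (0 : ℝ),
      ∫⁻ x in Ioi 0, ENNReal.ofReal (x ^ n * (K (x / t) * g t / t)) =
        ENNReal.ofReal (t ^ n * g t) * ∫⁻ u in Ioi 0, ENNReal.ofReal (u ^ n * K u) := by
    intro t (ht : 0 < t)
    rw [← setLIntegral_Ioi_comp_mul_left ht, ← lintegral_const_mul' _ _ ofReal_ne_top]
    refine setLIntegral_congr_fun measurableSet_Ioi fun u _ => ?_
    have hgt : 0 ≤ t ^ n * g t := by have := hg₀ t; positivity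
    rw [← ENNReal.ofReal_mul ht.le, ← ENNReal.ofReal_mul hgt, mul_div_cancel_left₀ u ht.ne']
    congr 1
    field_simp
    ring
  rw [lintegral_lintegral_swap (by fun_prop), setLIntegral_congr_fun measurableSet_Ioi hinner,
    lintegral_mul_const _ (by fun_prop), mul_comm]

/-- Since the double integral is finite, the Bochner integral defining `mellinConv K g x` agrees
with the corresponding lower Lebesgue integral for almost every `x`. -/
theorem lintegral_pow_mul_mellinConv (hK : Measurable K) (hK₀ : ∀ u, 0 ≤ K u)
    (hg : Measurable g) (hg₀ : ∀ t, 0 ≤ g t)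
    (hfin : (∫⁻ u in Ioi 0, ENNReal.ofReal (u ^ n * K u)) *
        ∫⁻ t in Ioi 0, ENNReal.ofReal (t ^ n * g t) ≠ ∞) :
    ∫⁻ x in Ioi 0, ENNReal.ofReal (x ^ n * mellinConv K g x) =
      (∫⁻ u in Ioi 0, ENNReal.ofReal (u ^ n * K u)) *
        ∫⁻ t in Ioi 0, ENNReal.ofReal (t ^ n * g t) := by
  rw [← lintegral_pow_mul_lintegral_mellinConv n hK hg hg₀] at hfin ⊢
  have hfinite := ae_lt_top (Measurable.lintegral_prod_right (by fun_prop)) hfin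
  refine lintegral_congr_ae ?_
  filter_upwards [hfinite, self_mem_ae_restrict measurableSet_Ioi] with x hx (hx₀ : 0 < x)
  have hmeas : Measurable fun t => K (x / t) * g t / t := by fun_prop
  have hnonneg : 0 ≤ᵐ[volume.restrict (Ioi 0)] fun t => K (x / t) * g t / t := by
    filter_upwards [self_mem_ae_restrict measurableSet_Ioi] with t (ht : 0 < t)
    have := hK₀ (x / t); have := hg₀ t; positivity
  have hpull : ∫⁻ t in Ioi 0, ENNReal.ofReal (x ^ n * (K (x / t) * g t / t)) =
      ENNReal.ofReal (x ^ n) * ∫⁻ t in Ioi 0, ENNReal.ofReal (K (x / t) * g t / t) := by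
    rw [← lintegral_const_mul' _ _ ofReal_ne_top]
    exact lintegral_congr fun t => ENNReal.ofReal_mul (by positivity)
  rw [hpull] at hx ⊢
  rw [mellinConv, integral_eq_lintegral_of_nonneg_ae hnonneg hmeas.aestronglyMeasurable,
    ENNReal.ofReal_mul (by positivity), ofReal_toReal]
  exact (lt_top_of_mul_ne_top_right hx.ne (by simp [pow_pos hx₀])).ne

end MellinConv

lemma lintegral_pow_mul_exp_neg (n : ℕ) :
    ∫⁻ x in Ioi 0, ENNReal.ofReal (x ^ n * Real.exp (-x)) = ENNReal.ofReal n.factorial := by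
  have hΓ : EqOn (fun x : ℝ => Real.exp (-x) * x ^ ((n + 1 : ℝ) - 1))
      (fun x => x ^ n * Real.exp (-x)) (Ioi 0) := fun x _ => by
    dsimp only
    rw [add_sub_cancel_right, Real.rpow_natCast, mul_comm]
  have hint := (Real.GammaIntegral_convergent (Nat.cast_add_one_pos n)).congr_fun hΓ
    measurableSet_Ioi
  have hnonneg : 0 ≤ᵐ[volume.restrict (Ioi 0)] fun x : ℝ => x ^ n * Real.exp (-x) := by
    filter_upwards [self_mem_ae_restrict measurableSet_Ioi] with x (hx : 0 < x)
    positivity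
  rw [← ofReal_integral_eq_lintegral_ofReal hint hnonneg,
    ← setIntegral_congr_fun measurableSet_Ioi hΓ,
    ← Real.Gamma_eq_integral (Nat.cast_add_one_pos n), Real.Gamma_nat_eq_factorial]

lemma measurable_Kker : ∀ m, Measurable (Kker m)
  | 0 => measurable_const
  | 1 => by simp only [Kker]; fun_prop
  | m + 2 => by
    have := measurable_Kker (m + 1)
    exact (Measurable.stronglyMeasurable (by fun_prop : Measurable fun p : ℝ × ℝ =>
      Kker (m + 1) (p.1 / p.2) * Real.exp (-p.2) / p.2)).integral_prod_right'.measurable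

lemma Kker_nonneg : ∀ m x, 0 ≤ Kker m x
  | 0, _ => le_rfl
  | 1, _ => (Real.exp_pos _).le
  | m + 2, x => setIntegral_nonneg measurableSet_Ioi fun t (ht : 0 < t) => by
    have := Kker_nonneg (m + 1) (x / t)
    positivity

theorem lintegral_pow_mul_Kker (n : ℕ) : ∀ m,
    ∫⁻ x in Ioi 0, ENNReal.ofReal (x ^ n * Kker (m + 1) x) =
      ENNReal.ofReal ((n.factorial : ℝ) ^ (m + 1))
  | 0 => by simpa only [Kker, zero_add, pow_one] using lintegral_pow_mul_exp_neg n
  | m + 1 => by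
    have hmoments :=
      congrArg₂ (· * ·) (lintegral_pow_mul_Kker n m) (lintegral_pow_mul_exp_neg n)
    rw [← ENNReal.ofReal_mul (by positivity), ← pow_succ] at hmoments
    rw [Kker_add_two, ← hmoments]
    exact lintegral_pow_mul_mellinConv n (measurable_Kker _) (Kker_nonneg _) (by fun_prop)
      (fun _ => (Real.exp_pos _).le) (hmoments ▸ ofReal_ne_top)

theorem integral_pow_mul_Kker (n m : ℕ) :
    ∫ x in Ioi 0, x ^ n * Kker (m + 1) x = (n.factorial : ℝ) ^ (m + 1) := by
  have hnonneg : 0 ≤ᵐ[volume.restrict (Ioi 0)] fun x : ℝ => x ^ n * Kker (m + 1) x := by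
    filter_upwards [self_mem_ae_restrict measurableSet_Ioi] with x (hx : 0 < x)
    have := Kker_nonneg (m + 1) x
    positivity
  have := measurable_Kker (m + 1)
  rw [integral_eq_lintegral_of_nonneg_ae hnonneg (by fun_prop), lintegral_pow_mul_Kker,
    toReal_ofReal (by positivity)]

lemma integral_Ioi_pow_mul_comp_sq {E : Type*} [NormedAddCommGroup E] [NormedSpace ℝ E]
    (g : ℝ → E) (n : ℕ) :
    ∫ r in Ioi 0, r ^ (2 * n + 1) • g (r ^ 2) = (2 : ℝ)⁻¹ • ∫ x in Ioi 0, x ^ n • g x := by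
  rw [← integral_comp_rpow_Ioi (fun x => x ^ n • g x) two_ne_zero, ← integral_smul]
  refine setIntegral_congr_fun measurableSet_Ioi fun r _ => ?_
  rw [smul_smul, smul_smul, Real.rpow_two, abs_two, show (2 : ℝ) - 1 = 1 by norm_num,
    Real.rpow_one]
  congr 1
  ring

lemma integral_exp_int_mul_I (j : ℤ) :
    ∫ θ in Ioo (-π) π, Complex.exp (j * θ * Complex.I) =
      if j = 0 then ((2 * π : ℝ) : ℂ) else 0 := by
  split_ifs with hj
  · simp [hj, two_mul, Real.pi_pos.le]
  · have hjI : (j : ℂ) * Complex.I ≠ 0 := mul_ne_zero (by exact_mod_cast hj) Complex.I_ne_zero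
    have hperiodic :
        Complex.exp (j * Complex.I * π) = Complex.exp (j * Complex.I * (-π : ℝ)) :=
      Complex.exp_eq_exp_iff_exists_int.mpr ⟨j, by push_cast; ring⟩
    rw [← integral_Ioc_eq_integral_Ioo,
      ← intervalIntegral.integral_of_le (by linarith [Real.pi_pos])]
    simp_rw [mul_right_comm _ _ Complex.I]
    rw [integral_exp_mul_complex hjI, hperiodic, sub_self, zero_div]

theorem integral_pow_mul_conj_pow_mul_radial (n k : ℕ) (f : ℝ → ℂ) :
    ∫ z : ℂ, z ^ n * (starRingEnd ℂ) z ^ k * f ‖z‖ =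
      (∫ r in Ioi (0 : ℝ), (r : ℂ) ^ (n + k + 1) * f r) *
        ∫ θ in Ioo (-π) π, Complex.exp (((n : ℤ) - k : ℤ) * θ * Complex.I) := by
  rw [← Complex.integral_comp_polarCoord_symm, polarCoord_target, Measure.volume_eq_prod,
    ← setIntegral_prod_mul]
  refine setIntegral_congr_fun (measurableSet_Ioi.prod measurableSet_Ioo) fun p hp => ?_
  obtain ⟨r, θ⟩ := p
  have hr : 0 < r := hp.1
  have hz : Complex.polarCoord.symm (r, θ) = r * Complex.exp (θ * Complex.I) := by
    rw [Complex.polarCoord_symm_apply, Complex.exp_mul_I, Complex.ofReal_cos,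
      Complex.ofReal_sin]
  have hconj :
      (starRingEnd ℂ) (Complex.exp (θ * Complex.I)) = Complex.exp (-(θ * Complex.I)) := by
    rw [← Complex.exp_conj, map_mul, Complex.conj_ofReal, Complex.conj_I, mul_neg]
  have hexp : Complex.exp (n * (θ * Complex.I)) * Complex.exp (k * -(θ * Complex.I)) =
      Complex.exp (((n : ℤ) - k : ℤ) * θ * Complex.I) := by
    rw [← Complex.exp_add]; push_cast; ring_nf
  rw [Complex.norm_polarCoord_symm, abs_of_pos hr, hz, map_mul, Complex.conj_ofReal, hconj,
    Complex.real_smul, mul_pow, mul_pow, ← Complex.exp_nat_mul, ← Complex.exp_nat_mul]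
  linear_combination (r : ℂ) ^ (n + k + 1) * f r * hexp

/-- For `m ≥ 1` and natural numbers `n, k`,
`∫∫_ℂ z^n conj(z)^k K_m(|z|²) dA(z) = π (n!)^m δ_{n,k}`,
with `dA` the Lebesgue area measure on `ℂ`. -/
theorem integral_monomials_Kker (m : ℕ) (hm : 1 ≤ m) (n k : ℕ) :
    ∫ z : ℂ, z ^ n * (starRingEnd ℂ) z ^ k * (Kker m (‖z‖ ^ 2) : ℂ) =
      if n = k then ((Real.pi * (Nat.factorial n : ℝ) ^ m : ℝ) : ℂ) else 0 := by
  obtain ⟨m, rfl⟩ := Nat.exists_eq_add_of_le' hm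
  rw [integral_pow_mul_conj_pow_mul_radial n k fun r => (Kker (m + 1) (r ^ 2) : ℂ),
    integral_exp_int_mul_I]
  by_cases hnk : n = k
  · subst hnk
    have hradial : ∫ r in Ioi (0 : ℝ), (r : ℂ) ^ (n + n + 1) * (Kker (m + 1) (r ^ 2) : ℂ) =
        (((n.factorial : ℝ) ^ (m + 1) / 2 : ℝ) : ℂ) := by
      simp_rw [← two_mul, ← Complex.ofReal_pow, ← Complex.real_smul]
      rw [integral_Ioi_pow_mul_comp_sq (fun x => (Kker (m + 1) x : ℂ)) n]
      simp_rw [Complex.real_smul, ← Complex.ofReal_mul]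
      rw [integral_complex_ofReal, integral_pow_mul_Kker]
      push_cast; ring
    rw [hradial, if_pos (sub_self _), if_pos rfl]
    push_cast; ring
  · rw [if_neg (by omega), if_neg hnk, mul_zero]
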